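/- arXiv:2601.22106 — 2 statements merged into one kernel-verified Lean document; each statement's English description precedes it below -/
import Mathlib

section
/- For symmetric positive definite matrices Q₁ and Q₂ whose largest eigenvalues are both at most Λ, one has ⟨∇f_S(Q₁) − ∇f_S(Q₂), Q₁ − Q₂⟩_F ≥ ‖Q₁ − Q₂‖_F² / Λ², where ∇f_S(Q) = S − Q⁻¹ and ⟨A,B⟩_F = tr(AᵀB). -/
/-!
Write `D = Q₁ - Q₂`. Since `Q₂⁻¹ - Q₁⁻¹ = Q₂⁻¹ D Q₁⁻¹`, the inner product is
`tr (Q₁⁻¹ (D Q₂⁻¹ D))`. The eigenvalue bound gives `Λ⁻¹ • 1 ≤ Q⁻¹` in the Loewner order, and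
`A ↦ tr (A M)` is monotone for `M ⪰ 0`. Applying this with `Q₁` and `M = D Q₂⁻¹ D`, then (after
cycling the trace) with `Q₂` and `M = D²`, bounds the inner product below by
`Λ⁻² tr (D²) = Λ⁻² ‖D‖_F²`.
-/

open Matrix

/-- The Frobenius norm of a real matrix. -/
noncomputable def frobNorm {d : ℕ} (A : Matrix (Fin d) (Fin d) ℝ) : ℝ :=
  Real.sqrt (∑ i, ∑ j, (A i j) ^ 2)

/-- The Frobenius inner product `⟨A, B⟩_F = tr(Aᵀ B)`. -/
def frobInner {d : ℕ} (A B : Matrix (Fin d) (Fin d) ℝ) : ℝ :=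
  (Aᵀ * B).trace

theorem frobInner_self {d : ℕ} (A : Matrix (Fin d) (Fin d) ℝ) :
    frobInner A A = frobNorm A ^ 2 := by
  rw [frobNorm, Real.sq_sqrt (by positivity), frobInner, trace, Finset.sum_comm]
  simp [mul_apply, sq]

open scoped MatrixOrder ComplexOrder

namespace Matrix

variable {n 𝕜 : Type*} [Fintype n] [DecidableEq n] [RCLike 𝕜]

theorem PosSemidef.trace_mul_nonneg {A B : Matrix n n 𝕜} (hA : A.PosSemidef)
    (hB : B.PosSemidef) : 0 ≤ (A * B).trace := by
  obtain ⟨s, rfl⟩ := CStarAlgebra.nonneg_iff_eq_star_mul_self.mp hA.nonneg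
  rw [mul_assoc, trace_mul_comm, star_eq_conjTranspose]
  exact (hB.mul_mul_conjTranspose_same s).trace_nonneg

theorem trace_mul_le_trace_mul_of_le {A B M : Matrix n n 𝕜} (hAB : A ≤ B)
    (hM : M.PosSemidef) : (A * M).trace ≤ (B * M).trace := by
  simpa [sub_mul] using hAB.trace_mul_nonneg hM

theorem PosDef.inv_smul_one_le_inv {Q : Matrix n n 𝕜} (hQ : Q.PosDef)
    {Λ : ℝ} (h : ∀ i, hQ.1.eigenvalues i ≤ Λ) : Λ⁻¹ • 1 ≤ Q⁻¹ := by
  have hQinv : IsSelfAdjoint Q⁻¹ := hQ.inv.1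
  rw [← Algebra.algebraMap_eq_smul_one]
  refine algebraMap_le_of_le_spectrum (fun x hx => ?_) hQinv
  lift Q to (Matrix n n 𝕜)ˣ using hQ.isUnit
  rw [← coe_units_inv, ← spectrum.map_inv, Set.mem_inv,
    hQ.1.spectrum_real_eq_range_eigenvalues] at hx
  obtain ⟨i, hi⟩ := hx
  rw [← inv_inv x]
  exact inv_anti₀ (hi ▸ hQ.eigenvalues_pos i) (hi ▸ h i)

theorem PosDef.smul_trace_le_trace_inv_mul {Q M : Matrix n n 𝕜} (hQ : Q.PosDef)
    {Λ : ℝ} (h : ∀ i, hQ.1.eigenvalues i ≤ Λ) (hM : M.PosSemidef) :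
    Λ⁻¹ • M.trace ≤ (Q⁻¹ * M).trace := by
  simpa [smul_mul, trace_smul] using trace_mul_le_trace_mul_of_le (hQ.inv_smul_one_le_inv h) hM

end Matrix

theorem stmt_6_general {d : ℕ} (S : Matrix (Fin d) (Fin d) ℝ)
    (Q₁ Q₂ : Matrix (Fin d) (Fin d) ℝ) (hQ₁ : Q₁.PosDef) (hQ₂ : Q₂.PosDef)
    (Lam : ℝ) (hLam : 0 < Lam)
    (h₁ : ∀ i, hQ₁.1.eigenvalues i ≤ Lam) (h₂ : ∀ i, hQ₂.1.eigenvalues i ≤ Lam) :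
    frobNorm (Q₁ - Q₂) ^ 2 / Lam ^ 2
      ≤ frobInner ((S - Q₁⁻¹) - (S - Q₂⁻¹)) (Q₁ - Q₂) := by
  set D := Q₁ - Q₂
  have hD : Dᴴ = D := (hQ₁.1.sub hQ₂.1).eq
  have hgrad : (S - Q₁⁻¹) - (S - Q₂⁻¹) = Q₂⁻¹ * D * Q₁⁻¹ := by
    rw [sub_sub_sub_cancel_left, inv_sub_inv (iff_of_true hQ₂.isUnit hQ₁.isUnit)]
  have hDD : (D * D).PosSemidef := by simpa only [hD] using posSemidef_conjTranspose_mul_self D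
  have hDQD : (D * Q₂⁻¹ * D).PosSemidef := by
    simpa only [hD] using hQ₂.inv.posSemidef.conjTranspose_mul_mul_same D
  calc frobNorm D ^ 2 / Lam ^ 2 = Lam⁻¹ * (Lam⁻¹ * (D * D).trace) := by
        rw [← frobInner_self, frobInner, ← conjTranspose_eq_transpose_of_trivial, hD]
        ring
    _ ≤ Lam⁻¹ * (D * Q₂⁻¹ * D).trace := by
        rw [trace_mul_cycle, trace_mul_comm (D * D)]
        gcongr
        exact hQ₂.smul_trace_le_trace_inv_mul h₂ hDD
    _ ≤ (Q₁⁻¹ * (D * Q₂⁻¹ * D)).trace := hQ₁.smul_trace_le_trace_inv_mul h₁ hDQD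
    _ = frobInner ((S - Q₁⁻¹) - (S - Q₂⁻¹)) D := by
        rw [hgrad, frobInner, ← conjTranspose_eq_transpose_of_trivial]
        simp only [conjTranspose_mul, hD, hQ₁.inv.1.eq, hQ₂.inv.1.eq, mul_assoc]

/-- For symmetric positive definite `Q₁, Q₂` whose largest eigenvalues are at
most `Λ`, one has `⟨∇f_S(Q₁) − ∇f_S(Q₂), Q₁ − Q₂⟩_F ≥ ‖Q₁ − Q₂‖_F² / Λ²`, where
`∇f_S(Q) = S − Q⁻¹`. -/
theorem stmt_6 {d : ℕ} (S : Matrix (Fin d) (Fin d) ℝ) (hS : S.PosSemidef)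
    (Q₁ Q₂ : Matrix (Fin d) (Fin d) ℝ) (hQ₁ : Q₁.PosDef) (hQ₂ : Q₂.PosDef)
    (Lam : ℝ) (hLam : 0 < Lam)
    (h₁ : ∀ i, hQ₁.1.eigenvalues i ≤ Lam) (h₂ : ∀ i, hQ₂.1.eigenvalues i ≤ Lam) :
    frobNorm (Q₁ - Q₂) ^ 2 / Lam ^ 2
      ≤ frobInner ((S - Q₁⁻¹) - (S - Q₂⁻¹)) (Q₁ - Q₂) :=
  stmt_6_general S Q₁ Q₂ hQ₁ hQ₂ Lam hLam h₁ h₂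
end

section
/- In the setting of the exact block update, the decrease of the Gaussian graphical loss equals f_S(Q) − f_S(Q̃) = tr(S_{I,I}(R_{I,I})⁻¹) − m − log det(S_{I,I}(R_{I,I})⁻¹); in particular this quantity is nonnegative. -/
/-!
With `J` the selection matrix of `I`, `A = R_{I,I} = J Q⁻¹ Jᵀ` and `B = S_{I,I} = J S Jᵀ`, the
update is the low-rank perturbation `Q̃ = Q + Jᵀ (B⁻¹ − A⁻¹) J`. Cyclicity of the trace gives
`tr(S Q̃) = tr(S Q) + m − tr(B A⁻¹)`, and the matrix determinant lemma together with
`1 + (B⁻¹ − A⁻¹) A = B⁻¹ A` gives `det Q̃ = det Q · det(B⁻¹ A)`.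
For nonnegativity write `A⁻¹ = Xᴴ X`: then `B A⁻¹` has the trace and determinant of the positive
definite `X B Xᴴ`, and `tr M − m − log det M = ∑ (λ − 1 − log λ) ≥ 0` over its eigenvalues.
-/

open Matrix

/-- The Gaussian graphical loss `f_S(Q) = tr(S Q) − log (det Q)`. -/
noncomputable def gaussLoss {d : ℕ} (S Q : Matrix (Fin d) (Fin d) ℝ) : ℝ :=
  (S * Q).trace - Real.log Q.det

/-- The `s × t` block of a matrix. -/
def blk {d : ℕ} (A : Matrix (Fin d) (Fin d) ℝ) (s t : Finset (Fin d)) :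
    Matrix ↥s ↥t ℝ :=
  Matrix.of fun i j => A i.1 j.1

/-- The exact block update of `Q`: it agrees with `Q` outside the `I × I` block,
and `Q̃_{I,I} = Q_{I,I} + (S_{I,I})⁻¹ − (R_{I,I})⁻¹` with `R = Q⁻¹`. -/
noncomputable def blockUpdate {d : ℕ} (S Q : Matrix (Fin d) (Fin d) ℝ)
    (s : Finset (Fin d)) : Matrix (Fin d) (Fin d) ℝ :=
  Matrix.of fun i j =>
    if hi : i ∈ s then
      if hj : j ∈ s then
        Q i j + ((blk S s s)⁻¹ - (blk Q⁻¹ s s)⁻¹) ⟨i, hi⟩ ⟨j, hj⟩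
      else Q i j
    else Q i j

section LowRankUpdate

variable {m n R : Type*} [Fintype m] [Fintype n] [CommRing R]

lemma trace_mul_add_transpose_mul_mul (S Q : Matrix n n R) (J : Matrix m n R)
    (Δ : Matrix m m R) :
    (S * (Q + Jᵀ * Δ * J)).trace = (S * Q).trace + (J * S * Jᵀ * Δ).trace := by
  rw [Matrix.mul_add, trace_add, ← Matrix.mul_assoc, trace_mul_comm (S * (Jᵀ * Δ)),
    ← Matrix.mul_assoc, ← Matrix.mul_assoc]

lemma det_add_transpose_mul_mul [DecidableEq m] [DecidableEq n] {Q : Matrix n n R}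
    (hQ : IsUnit Q.det) (J : Matrix m n R) (Δ : Matrix m m R) :
    (Q + Jᵀ * Δ * J).det = Q.det * (1 + Δ * (J * Q⁻¹ * Jᵀ)).det := by
  rw [Matrix.mul_assoc, det_add_mul _ _ hQ, Matrix.mul_assoc, Matrix.mul_assoc,
    Matrix.mul_assoc]

end LowRankUpdate

theorem gaussLoss_sub_gaussLoss_add_transpose_mul_mul {d : ℕ} {m : Type*} [Fintype m]
    [DecidableEq m] {S Q : Matrix (Fin d) (Fin d) ℝ} {J : Matrix m (Fin d) ℝ}
    {A B : Matrix m m ℝ} (hA : J * Q⁻¹ * Jᵀ = A) (hB : J * S * Jᵀ = B) (hQ : Q.det ≠ 0)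
    (hA₀ : A.det ≠ 0) (hB₀ : B.det ≠ 0) :
    gaussLoss S Q - gaussLoss S (Q + Jᵀ * (B⁻¹ - A⁻¹) * J)
      = (B * A⁻¹).trace - Fintype.card m - Real.log (B * A⁻¹).det := by
  have htr : (B * (B⁻¹ - A⁻¹)).trace = Fintype.card m - (B * A⁻¹).trace := by
    rw [Matrix.mul_sub, mul_nonsing_inv B hB₀.isUnit, trace_sub, trace_one]
  have hone : 1 + (B⁻¹ - A⁻¹) * A = B⁻¹ * A := by
    rw [Matrix.sub_mul, nonsing_inv_mul A hA₀.isUnit]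
    abel
  have hdet : Real.log (B⁻¹ * A).det = -Real.log (B * A⁻¹).det := by
    simp only [det_mul, det_nonsing_inv, Ring.inverse_eq_inv']
    rw [Real.log_mul (inv_ne_zero hB₀) hA₀, Real.log_mul hB₀ (inv_ne_zero hA₀), Real.log_inv,
      Real.log_inv]
    ring
  rw [gaussLoss, gaussLoss, trace_mul_add_transpose_mul_mul, hB, htr,
    det_add_transpose_mul_mul hQ.isUnit, hA, hone, Real.log_mul hQ (by simp [hA₀, hB₀]), hdet]
  ring

section Selection

variable {n : Type*} [DecidableEq n]

def selectionMatrix (R : Type*) [Zero R] [One R] (s : Finset n) : Matrix s n R :=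
  (1 : Matrix n n R).submatrix Subtype.val id

variable {R : Type*} [Semiring R]

lemma selectionMatrix_mul_mul_transpose [Fintype n] (s : Finset n) (M : Matrix n n R) :
    selectionMatrix R s * M * (selectionMatrix R s)ᵀ = M.submatrix Subtype.val Subtype.val := by
  ext a b
  simp [selectionMatrix, mul_apply, one_apply]

lemma transpose_selectionMatrix_mul_mul_apply (s : Finset n) (Δ : Matrix s s R) (i j : n) :
    ((selectionMatrix R s)ᵀ * Δ * selectionMatrix R s) i j =
      if hi : i ∈ s then if hj : j ∈ s then Δ ⟨i, hi⟩ ⟨j, hj⟩ else 0 else 0 := by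
  have ne_of_notMem {k : n} (hk : k ∉ s) (a : s) : k ≠ a := fun h => hk (h ▸ a.2)
  by_cases hi : i ∈ s
  · by_cases hj : j ∈ s
    · lift i to s using hi
      lift j to s using hj
      simp [selectionMatrix, mul_apply, one_apply]
    · simp [selectionMatrix, mul_apply, one_apply, hj, (ne_of_notMem hj _).symm]
  · simp [selectionMatrix, mul_apply, one_apply, hi, ne_of_notMem hi]

end Selection

lemma blk_eq_selectionMatrix_mul_mul_transpose {d : ℕ} (M : Matrix (Fin d) (Fin d) ℝ)
    (s : Finset (Fin d)) :
    blk M s s = selectionMatrix ℝ s * M * (selectionMatrix ℝ s)ᵀ :=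
  (selectionMatrix_mul_mul_transpose s M).symm

lemma blockUpdate_eq_add {d : ℕ} (S Q : Matrix (Fin d) (Fin d) ℝ) (s : Finset (Fin d)) :
    blockUpdate S Q s = Q + (selectionMatrix ℝ s)ᵀ * ((blk S s s)⁻¹ - (blk Q⁻¹ s s)⁻¹) *
      selectionMatrix ℝ s := by
  ext i j
  rw [Matrix.add_apply, transpose_selectionMatrix_mul_mul_apply]
  simp only [blockUpdate, of_apply]
  split_ifs <;> simp

lemma trace_sub_card_sub_log_det_nonneg {n : Type*} [Fintype n] [DecidableEq n]
    {M : Matrix n n ℝ} (hM : M.PosDef) : 0 ≤ M.trace - Fintype.card n - Real.log M.det := by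
  have hlog : Real.log M.det = ∑ i, Real.log (hM.1.eigenvalues i) := by
    rw [hM.1.det_eq_prod_eigenvalues, ← RCLike.ofReal_prod, RCLike.ofReal_real_eq_id, id,
      Real.log_prod fun i _ => (hM.eigenvalues_pos i).ne']
  rw [hM.1.trace_eq_sum_eigenvalues, hlog, Fintype.card_eq_sum_ones, Nat.cast_sum,
    ← Finset.sum_sub_distrib, ← Finset.sum_sub_distrib]
  refine Finset.sum_nonneg fun i _ => ?_
  have := Real.log_le_sub_one_of_pos (hM.eigenvalues_pos i)
  simp only [RCLike.ofReal_real_eq_id, id, Nat.cast_one]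
  linarith

open scoped MatrixOrder in
lemma trace_mul_sub_card_sub_log_det_mul_nonneg {n : Type*} [Fintype n] [DecidableEq n]
    {B P : Matrix n n ℝ} (hB : B.PosDef) (hP : P.PosDef) :
    0 ≤ (B * P).trace - Fintype.card n - Real.log (B * P).det := by
  obtain ⟨X, rfl⟩ := CStarAlgebra.nonneg_iff_eq_star_mul_self.mp hP.posSemidef.nonneg
  have hX : IsUnit X := isUnit_of_mul_isUnit_right hP.isUnit
  have htr : (B * (star X * X)).trace = (X * B * star X).trace := by
    rw [← Matrix.mul_assoc, trace_mul_comm, ← Matrix.mul_assoc]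
  have hdet : (B * (star X * X)).det = (X * B * star X).det := by
    simp only [det_mul]
    ring
  rw [htr, hdet]
  exact trace_sub_card_sub_log_det_nonneg ((IsUnit.posDef_star_right_conjugate_iff hX).mpr hB)

/-- The decrease of the Gaussian graphical loss in an exact block update equals
`tr(S_{I,I}(R_{I,I})⁻¹) − m − log det(S_{I,I}(R_{I,I})⁻¹)` with `R = Q⁻¹` and
`m = |I|`; in particular it is nonnegative. -/
theorem stmt_14 {d : ℕ} (S Q : Matrix (Fin d) (Fin d) ℝ)
    (hS : S.PosDef) (hQ : Q.PosDef) (s : Finset (Fin d)) :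
    gaussLoss S Q - gaussLoss S (blockUpdate S Q s)
        = (blk S s s * (blk Q⁻¹ s s)⁻¹).trace - (s.card : ℝ)
            - Real.log (blk S s s * (blk Q⁻¹ s s)⁻¹).det ∧
      0 ≤ gaussLoss S Q - gaussLoss S (blockUpdate S Q s) := by
  have hA : (blk Q⁻¹ s s).PosDef := hQ.inv.submatrix Subtype.val_injective
  have hB : (blk S s s).PosDef := hS.submatrix Subtype.val_injective
  have hdecrease := gaussLoss_sub_gaussLoss_add_transpose_mul_mul
    (blk_eq_selectionMatrix_mul_mul_transpose Q⁻¹ s).symm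
    (blk_eq_selectionMatrix_mul_mul_transpose S s).symm hQ.det_pos.ne' hA.det_pos.ne'
    hB.det_pos.ne'
  have hnonneg := trace_mul_sub_card_sub_log_det_mul_nonneg hB hA.inv
  rw [← blockUpdate_eq_add] at hdecrease
  rw [Fintype.card_coe] at hdecrease hnonneg
  exact ⟨hdecrease, hdecrease ▸ hnonneg⟩
end
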